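/- arXiv:2303.06835 — 5 statements merged into one kernel-verified Lean document; each statement's English description precedes it below -/
import Mathlib

section
/- The quotient group 𝐐/𝐙 is a countable torsion abelian group; that is, 𝐐 is countable and for every x ∈ 𝐐 there exists a positive integer N such that N·x ∈ 𝐙. -/
noncomputable section

/-- The group 𝐐: subgroup of ℚ ⊕ ∏_{m∈ℤ} ℚ of pairs (a, (a_m)) with
a_m = 3^{|m|}·a for all but finitely many m. -/
def bbQ : AddSubgroup (ℚ × (ℤ → ℚ)) where
  carrier := {x | {m : ℤ | x.2 m ≠ 3 ^ m.natAbs * x.1}.Finite}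
  zero_mem' := by
    have : {m : ℤ | (0 : ℚ × (ℤ → ℚ)).2 m ≠ 3 ^ m.natAbs * (0 : ℚ × (ℤ → ℚ)).1} = ∅ := by
      ext m; simp
    simp only [Set.mem_setOf_eq, this]
    exact Set.finite_empty
  add_mem' := by
    intro x y hx hy
    refine Set.Finite.subset (Set.Finite.union hx hy) ?_
    intro m hm
    simp only [Set.mem_setOf_eq, Set.mem_union]
    by_contra h
    push_neg at h
    apply hm
    show (x + y).2 m = 3 ^ m.natAbs * (x + y).1
    have : (x + y).2 m = x.2 m + y.2 m := rfl
    rw [this, h.1, h.2]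
    show _ = 3 ^ m.natAbs * (x.1 + y.1)
    ring
  neg_mem' := by
    intro x hx
    refine Set.Finite.subset hx ?_
    intro m hm
    simp only [Set.mem_setOf_eq] at hm ⊢
    intro h
    apply hm
    have h2 : (-x).2 m = -(x.2 m) := rfl
    have h1 : (-x).1 = -x.1 := rfl
    rw [h2, h1, h]
    ring

lemma mem_bbQ {x : ℚ × (ℤ → ℚ)} :
    x ∈ bbQ ↔ {m : ℤ | x.2 m ≠ 3 ^ m.natAbs * x.1}.Finite := Iff.rfl

/-- The group 𝐙: subgroup of 𝐐 of pairs (a, (a_m)) with a ∈ ℤ[1/3] and each a_m ∈ ℤ. -/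
def bbZ : AddSubgroup (ℚ × (ℤ → ℚ)) where
  carrier := {x | x ∈ bbQ ∧ (∃ k : ℤ, ∃ j : ℕ, x.1 = (k : ℚ) / 3 ^ j) ∧
    ∀ m : ℤ, ∃ n : ℤ, x.2 m = (n : ℚ)}
  zero_mem' := by
    refine ⟨zero_mem _, ⟨0, 0, by norm_num⟩, fun m => ⟨0, rfl⟩⟩
  add_mem' := by
    rintro x y ⟨hxQ, ⟨k, j, hk⟩, hxi⟩ ⟨hyQ, ⟨k', j', hk'⟩, hyi⟩
    refine ⟨add_mem hxQ hyQ, ⟨k * 3 ^ j' + k' * 3 ^ j, j + j', ?_⟩, fun m => ?_⟩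
    · show x.1 + y.1 = _
      rw [hk, hk']
      push_cast
      rw [pow_add]
      field_simp
    · obtain ⟨n, hn⟩ := hxi m
      obtain ⟨n', hn'⟩ := hyi m
      exact ⟨n + n', by show x.2 m + y.2 m = _; rw [hn, hn']; push_cast; ring⟩
  neg_mem' := by
    rintro x ⟨hxQ, ⟨k, j, hk⟩, hxi⟩
    refine ⟨neg_mem hxQ, ⟨-k, j, ?_⟩, fun m => ?_⟩
    · show -x.1 = _
      rw [hk]; push_cast; ring
    · obtain ⟨n, hn⟩ := hxi m
      exact ⟨-n, by show -(x.2 m) = _; rw [hn]; push_cast; ring⟩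


lemma aux_int_of_den_dvd (q : ℚ) (n : ℕ) (h : q.den ∣ n) : ∃ k : ℤ, (n : ℚ) * q = k := by
  obtain ⟨c, rfl⟩ := h
  refine ⟨c * q.num, ?_⟩
  have hden : ((q.den : ℚ)) * q = q.num := by
    rw [mul_comm]
    exact_mod_cast Rat.mul_den_eq_num q
  push_cast
  rw [mul_comm (q.den : ℚ) (c : ℚ), mul_assoc, hden]

/-- Encode an element of bbQ by its first coordinate and the finitely supported
difference function. -/
def bbQEncode (x : ↥bbQ) : ℚ × (ℤ →₀ ℚ) :=
  (x.1.1,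
    ⟨(x.2 : {m : ℤ | x.1.2 m ≠ 3 ^ m.natAbs * x.1.1}.Finite).toFinset,
      fun m => x.1.2 m - 3 ^ m.natAbs * x.1.1,
      by
        intro m
        refine Iff.trans (Set.Finite.mem_toFinset ..) ?_
        simp [sub_ne_zero, Set.mem_setOf_eq]⟩)

lemma bbQEncode_injective : Function.Injective bbQEncode := by
  intro x y h
  have h1 : x.1.1 = y.1.1 := congrArg (fun p : ℚ × (ℤ →₀ ℚ) => p.1) h
  have h2 := congrArg (fun p : ℚ × (ℤ →₀ ℚ) => p.2) h
  have h3 : ∀ m : ℤ, x.1.2 m - 3 ^ m.natAbs * x.1.1 = y.1.2 m - 3 ^ m.natAbs * y.1.1 := by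
    intro m
    exact congrFun (congrArg (Finsupp.toFun) h2) m
  apply Subtype.ext
  apply Prod.ext h1
  funext m
  have := h3 m
  rw [h1] at this
  linarith [this]

/-- The quotient group 𝐐/𝐙 is a countable torsion abelian group:
𝐐 is countable, and every element of 𝐐 has a positive integer multiple lying in 𝐙. -/
theorem bbQ_quot_bbZ_countable_torsion :
    Countable ↥bbQ ∧ ∀ x ∈ bbQ, ∃ N : ℕ, 0 < N ∧ N • x ∈ bbZ := by
  constructor
  · exact Function.Injective.countable bbQEncode_injective
  · intro x hx
    set S : Finset ℤ := (mem_bbQ.mp hx).toFinset with hS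
    refine ⟨x.1.den * ∏ m ∈ S, (x.2 m).den, ?_, ?_⟩
    · exact Nat.mul_pos x.1.den_pos (Finset.prod_pos (fun m _ => (x.2 m).den_pos))
    · set N : ℕ := x.1.den * ∏ m ∈ S, (x.2 m).den with hN
      have hfst : (N • x).1 = (N : ℚ) * x.1 := by
        show N • x.1 = _
        rw [nsmul_eq_mul]
      have hsnd : ∀ m : ℤ, (N • x).2 m = (N : ℚ) * x.2 m := by
        intro m
        show N • x.2 m = _
        rw [nsmul_eq_mul]
      obtain ⟨k, hk⟩ := aux_int_of_den_dvd x.1 N (Dvd.intro _ rfl)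
      refine ⟨AddSubgroup.nsmul_mem bbQ hx N, ⟨k, 0, by rw [hfst, hk]; norm_num⟩, ?_⟩
      intro m
      rw [hsnd]
      by_cases hm : m ∈ S
      · have hdvd : (x.2 m).den ∣ N := by
          exact Dvd.dvd.mul_left (Finset.dvd_prod_of_mem _ hm) _
        exact aux_int_of_den_dvd (x.2 m) N hdvd
      · have heq : x.2 m = 3 ^ m.natAbs * x.1 := by
          have := hm
          rw [hS, Set.Finite.mem_toFinset, Set.mem_setOf_eq] at this
          push_neg at this
          exact this
        refine ⟨3 ^ m.natAbs * k, ?_⟩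
        rw [heq]
        push_cast
        rw [← mul_assoc, mul_comm (N : ℚ) (3 ^ m.natAbs : ℚ), mul_assoc, hk]


end
end

section
/- Let ℚ³_χ denote the subgroup of ℚ/ℤ consisting of the classes [q/p] with p, q integers, p ≠ 0 and 3 ∤ p. Then the quotient 𝐐/𝐙 is isomorphic, as an abelian group, to the subgroup of ℚ³_χ ⊕ ∏_{m∈ℤ} (ℚ/ℤ) consisting of the pairs (b, (b_m)_{m∈ℤ}) such that b_m = 3^{|m|}·b (multiplication in ℚ/ℤ) for all but finitely many m ∈ ℤ. -/
noncomputable section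

/-- The group ℚ/ℤ. -/
abbrev QmodZ : Type := ℚ ⧸ AddSubgroup.zmultiples (1 : ℚ)

/-- ℚ³_χ: the subgroup of ℚ/ℤ of classes [q/p] with p, q integers, p ≠ 0 and 3 ∤ p. -/
def ratChi3 : AddSubgroup QmodZ where
  carrier := {x | ∃ p q : ℤ, p ≠ 0 ∧ ¬ (3 : ℤ) ∣ p ∧ x = ((q : ℚ) / (p : ℚ) : ℚ)}
  zero_mem' := ⟨1, 0, one_ne_zero, by decide, by norm_num⟩
  add_mem' := by
    rintro x y ⟨p, q, hp, h3, hx⟩ ⟨p', q', hp', h3', hy⟩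
    refine ⟨p * p', q * p' + q' * p, mul_ne_zero hp hp', ?_, ?_⟩
    · intro hd
      rcases (Int.prime_three.dvd_mul).mp hd with h | h
      · exact h3 h
      · exact h3' h
    · rw [hx, hy, ← QuotientAddGroup.mk_add]
      congr 1
      have hpc : (p : ℚ) ≠ 0 := Int.cast_ne_zero.mpr hp
      have hpc' : (p' : ℚ) ≠ 0 := Int.cast_ne_zero.mpr hp'
      push_cast
      field_simp
  neg_mem' := by
    rintro x ⟨p, q, hp, h3, hx⟩
    refine ⟨p, -q, hp, h3, ?_⟩
    rw [hx]
    have : (-((q : ℚ) / (p : ℚ)) : ℚ) = ((↑(-q) : ℚ) / (p : ℚ) : ℚ) := by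
      push_cast; ring
    rw [← this]
    exact rfl

/-- The subgroup of ℚ³_χ ⊕ ∏_{m∈ℤ}(ℚ/ℤ) of pairs (b, (b_m)) with b_m = 3^{|m|}·b for all
but finitely many m. -/
def targetGrp : AddSubgroup (↥ratChi3 × (ℤ → QmodZ)) where
  carrier := {x | {m : ℤ | x.2 m ≠ (3 ^ m.natAbs : ℕ) • (x.1 : QmodZ)}.Finite}
  zero_mem' := by
    have : {m : ℤ | ((0 : ↥ratChi3 × (ℤ → QmodZ))).2 m
        ≠ (3 ^ m.natAbs : ℕ) • (((0 : ↥ratChi3 × (ℤ → QmodZ))).1 : QmodZ)} = ∅ := by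
      ext m; simp
    simp only [Set.mem_setOf_eq, this]
    exact Set.finite_empty
  add_mem' := by
    intro x y hx hy
    refine Set.Finite.subset (Set.Finite.union hx hy) ?_
    intro m hm
    simp only [Set.mem_setOf_eq, Set.mem_union]
    by_contra h
    push_neg at h
    apply hm
    show x.2 m + y.2 m = (3 ^ m.natAbs : ℕ) • (((x.1 : QmodZ)) + (y.1 : QmodZ))
    rw [h.1, h.2, smul_add]
  neg_mem' := by
    intro x hx
    refine Set.Finite.subset hx ?_
    intro m hm
    simp only [Set.mem_setOf_eq] at hm ⊢
    intro h
    apply hm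
    show -(x.2 m) = (3 ^ m.natAbs : ℕ) • (-(x.1 : QmodZ))
    rw [h, smul_neg]



/-- prime-to-3 denominator rationals -/
def isR (a : ℚ) : Prop := ¬ (3:ℕ) ∣ a.den
/-- ℤ[1/3] -/
def isS (a : ℚ) : Prop := ∃ k : ℤ, ∃ j : ℕ, a = (k:ℚ)/3^j

lemma isR_add {a b : ℚ} (ha : isR a) (hb : isR b) : isR (a+b) := by
  intro h
  have := h.trans (Rat.add_den_dvd a b)
  rcases (Nat.Prime.dvd_mul (by norm_num)).mp this with h | h
  exacts [ha h, hb h]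

lemma isR_neg {a : ℚ} (ha : isR a) : isR (-a) := by
  simpa [isR, Rat.neg_den] using ha

lemma isR_sub {a b : ℚ} (ha : isR a) (hb : isR b) : isR (a-b) := by
  simpa [sub_eq_add_neg] using isR_add ha (isR_neg hb)

lemma isS_add {a b : ℚ} (ha : isS a) (hb : isS b) : isS (a+b) := by
  obtain ⟨k, j, rfl⟩ := ha; obtain ⟨k', j', rfl⟩ := hb
  exact ⟨k * 3 ^ j' + k' * 3 ^ j, j + j', by push_cast; rw [pow_add]; field_simp⟩

lemma isS_neg {a : ℚ} (ha : isS a) : isS (-a) := by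
  obtain ⟨k, j, rfl⟩ := ha; exact ⟨-k, j, by push_cast; ring⟩

lemma isS_sub {a b : ℚ} (ha : isS a) (hb : isS b) : isS (a-b) := by
  simpa [sub_eq_add_neg] using isS_add ha (isS_neg hb)

lemma den_dvd_of_isS {a : ℚ} (ha : isS a) : ∃ j : ℕ, (a.den:ℤ) ∣ 3 ^ j := by
  obtain ⟨k, j, rfl⟩ := ha
  refine ⟨j, ?_⟩
  have := Rat.den_dvd k (3 ^ j)
  rwa [Rat.divInt_eq_div, Int.cast_pow] at this

lemma int_of_isR_isS {a : ℚ} (hR : isR a) (hS : isS a) : ∃ n : ℤ, a = (n:ℚ) := by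
  obtain ⟨j, hj⟩ := den_dvd_of_isS hS
  have hjn : a.den ∣ 3 ^ j := by
    have : (a.den:ℤ) ∣ ((3 ^ j : ℕ) : ℤ) := by push_cast; exact hj
    exact_mod_cast this
  have hcop : Nat.Coprime a.den 3 :=
    (Nat.coprime_comm.mp ((Nat.Prime.coprime_iff_not_dvd (by norm_num)).mpr hR))
  have hden : a.den = 1 := (Nat.Coprime.pow_right j hcop).eq_one_of_dvd hjn
  refine ⟨a.num, ?_⟩
  have := Rat.num_div_den a
  rw [hden] at this
  simpa using this.symm


noncomputable section

lemma exists_decomp (a : ℚ) : ∃ v : ℚ, isR v ∧ isS (a - v) := by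
  set d := a.den with hd
  have hd0 : d ≠ 0 := a.den_nz
  set j := (d.factorization 3) with hj
  set p := d / 3 ^ j with hp
  have hdp : 3 ^ j * p = d := Nat.ordProj_mul_ordCompl_eq_self d 3
  have h3p : ¬ (3:ℕ) ∣ p := Nat.not_dvd_ordCompl (by norm_num) hd0
  have hp0 : p ≠ 0 := by
    intro h; rw [h, mul_zero] at hdp; exact hd0 hdp.symm
  have hcop : IsCoprime ((3:ℤ) ^ j) (p:ℤ) := by
    rw [Int.isCoprime_iff_gcd_eq_one]
    have : ((3:ℤ))^j = ((3^j : ℕ) : ℤ) := by push_cast; ring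
    rw [this, Int.gcd_natCast_natCast]
    exact Nat.Coprime.pow_left j ((Nat.Prime.coprime_iff_not_dvd (by norm_num)).mpr h3p)
  obtain ⟨s, t, hst⟩ := hcop
  set v : ℚ := ((a.num * s : ℤ) : ℚ) / ((p : ℤ) : ℚ) with hv
  refine ⟨v, ?_, ?_⟩
  · intro hdvd
    have h1 : ((Rat.divInt (a.num * s) (p:ℤ)).den : ℤ) ∣ (p:ℤ) := Rat.den_dvd _ _
    rw [Rat.divInt_eq_div] at h1
    have h3 : (3:ℤ) ∣ (v.den : ℤ) := by exact_mod_cast hdvd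
    rw [hv] at h3
    have : (3:ℤ) ∣ (p:ℤ) := h3.trans h1
    exact h3p (by exact_mod_cast this)
  · refine ⟨a.num * t, j, ?_⟩
    have hdQ : ((d:ℚ)) = 3 ^ j * (p:ℚ) := by exact_mod_cast hdp.symm
    have hstQ : (s:ℚ) * 3 ^ j + (t:ℚ) * (p:ℚ) = 1 := by exact_mod_cast hst
    have hpQ : ((p:ℕ):ℚ) ≠ 0 := by exact_mod_cast hp0
    have h3Q : ((3:ℚ)) ^ j ≠ 0 := by positivity
    have hdaQ : ((a.den:ℚ)) ≠ 0 := by exact_mod_cast hd0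
    have hnum : (a.num : ℚ) = a * (3 ^ j * (p:ℚ)) := by
      rw [← hdQ, hd]
      field_simp [Rat.num_div_den]
      exact (Rat.mul_den_eq_num a).symm
    rw [hv, eq_div_iff h3Q]
    push_cast
    field_simp
    linear_combination -hnum - (a.num:ℚ)*hstQ



lemma mk_eq_mk_of_int {a b : ℚ} (h : ∃ n : ℤ, a - b = (n:ℚ)) :
    ((a : QmodZ)) = (b : QmodZ) := by
  obtain ⟨n, hn⟩ := h
  rw [QuotientAddGroup.eq]
  refine AddSubgroup.mem_zmultiples_iff.mpr ⟨-n, ?_⟩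
  have : -a + b = -(a - b) := by ring
  rw [this, hn]
  simp

def chiV (a : ℚ) : ℚ := (exists_decomp a).choose
lemma chiV_isR (a : ℚ) : isR (chiV a) := (exists_decomp a).choose_spec.1
lemma chiV_isS (a : ℚ) : isS (a - chiV a) := (exists_decomp a).choose_spec.2

def chi (a : ℚ) : QmodZ := ((chiV a : ℚ) : QmodZ)

lemma chi_add (a b : ℚ) : chi (a + b) = chi a + chi b := by
  unfold chi
  rw [← QuotientAddGroup.mk_add]
  refine mk_eq_mk_of_int ?_
  have hR : isR (chiV (a+b) - (chiV a + chiV b)) :=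
    isR_sub (chiV_isR _) (isR_add (chiV_isR _) (chiV_isR _))
  have hS : isS (chiV (a+b) - (chiV a + chiV b)) := by
    have : chiV (a+b) - (chiV a + chiV b)
        = ((a - chiV a) + (b - chiV b)) - ((a + b) - chiV (a+b)) := by ring
    rw [this]
    exact isS_sub (isS_add (chiV_isS a) (chiV_isS b)) (chiV_isS (a+b))
  exact int_of_isR_isS hR hS

lemma chi_of_isR {a : ℚ} (h : isR a) : chi a = (a : QmodZ) := by
  refine mk_eq_mk_of_int ?_
  refine int_of_isR_isS (isR_sub (chiV_isR _) h) ?_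
  have : chiV a - a = -(a - chiV a) := by ring
  rw [this]
  exact isS_neg (chiV_isS a)

lemma chi_eq_zero_iff {a : ℚ} : chi a = 0 ↔ isS a := by
  unfold chi
  rw [QuotientAddGroup.eq_zero_iff, AddSubgroup.mem_zmultiples_iff]
  constructor
  · rintro ⟨n, hn⟩
    have h1 : chiV a = (n:ℚ) := by simpa using hn.symm
    have h2 : isS ((a - chiV a) + chiV a) :=
      isS_add (chiV_isS a) (by rw [h1]; exact ⟨n, 0, by simp⟩)
    simpa using h2
  · intro ha
    have : isS (chiV a) := by
      have h : chiV a = a - (a - chiV a) := by ring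
      rw [h]; exact isS_sub ha (chiV_isS a)
    obtain ⟨n, hn⟩ := int_of_isR_isS (chiV_isR a) this
    exact ⟨n, by simp [hn]⟩

lemma chi_mem_ratChi3 (a : ℚ) : chi a ∈ ratChi3 := by
  refine ⟨((chiV a).den : ℤ), (chiV a).num, ?_, ?_, ?_⟩
  · exact_mod_cast (chiV a).den_nz
  · have := chiV_isR a
    intro h
    exact this (by exact_mod_cast h)
  · unfold chi
    congr 1
    push_cast
    exact (Rat.num_div_den (chiV a)).symm

lemma mk_nsmul (n : ℕ) (a : ℚ) : (((n : ℚ) * a : ℚ) : QmodZ) = n • (a : QmodZ) := by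
  have : ((n : ℚ) * a) = n • a := by simp
  rw [this]
  exact map_nsmul (QuotientAddGroup.mk' (AddSubgroup.zmultiples (1:ℚ))) n a

lemma chi_pow_good {a : ℚ} {k : ℤ} {j : ℕ} (hkj : a - chiV a = (k:ℚ)/3^j)
    {n : ℕ} (hn : j ≤ n) :
    (((3:ℚ) ^ n * a : ℚ) : QmodZ) = (3 ^ n : ℕ) • chi a := by
  unfold chi
  rw [← mk_nsmul]
  refine mk_eq_mk_of_int ⟨k * 3 ^ (n - j), ?_⟩
  have h3 : ((3:ℚ))^j ≠ 0 := by positivity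
  have hpow : (3:ℚ) ^ (n - j) * 3 ^ j = 3 ^ n := pow_sub_mul_pow 3 hn
  have hkj' : (a - chiV a) * 3^j = (k:ℚ) := by rw [hkj]; field_simp
  push_cast
  linear_combination (3:ℚ)^(n-j) * hkj' + (chiV a - a) * hpow

lemma isR_div_int {q p : ℤ} (h3 : ¬ (3:ℤ) ∣ p) : isR ((q:ℚ)/(p:ℚ)) := by
  intro hdvd
  have h1 : (((Rat.divInt q p).den : ℤ)) ∣ p := Rat.den_dvd _ _
  rw [Rat.divInt_eq_div] at h1
  have h3' : (3:ℤ) ∣ (((q:ℚ)/(p:ℚ)).den : ℤ) := by exact_mod_cast hdvd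
  exact h3 (h3'.trans h1)

lemma cast_pow_mul (n : ℕ) (a : ℚ) :
    ((((3:ℚ)^n * a : ℚ)) : QmodZ) = ((3:ℕ)^n : ℕ) • (a : QmodZ) := by
  rw [← mk_nsmul]
  norm_num

def phiFun (x : ↥bbQ) : ↥targetGrp :=
  ⟨(⟨chi (x : ℚ × (ℤ → ℚ)).1, chi_mem_ratChi3 _⟩,
      fun m => (((x : ℚ × (ℤ → ℚ)).2 m : ℚ) : QmodZ)), by
    obtain ⟨k, j, hkj⟩ := chiV_isS (x : ℚ × (ℤ → ℚ)).1
    refine Set.Finite.subset (Set.Finite.union (mem_bbQ.mp x.2)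
      (Set.finite_Icc (-(j:ℤ)) (j:ℤ))) ?_
    intro m hm
    simp only [Set.mem_setOf_eq, Set.mem_union, Set.mem_Icc]
    by_contra h
    push_neg at h
    obtain ⟨h1, h2⟩ := h
    apply hm
    have hj : j ≤ m.natAbs := by omega
    show (((x : ℚ × (ℤ → ℚ)).2 m : ℚ) : QmodZ)
        = (3 ^ m.natAbs : ℕ) • chi (x : ℚ × (ℤ → ℚ)).1
    rw [h1]
    exact chi_pow_good hkj hj⟩

def phi : ↥bbQ →+ ↥targetGrp :=
  AddMonoidHom.mk' phiFun (by
    intro x y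
    apply Subtype.ext
    apply Prod.ext
    · apply Subtype.ext
      exact chi_add _ _
    · funext m
      rfl)

lemma ker_phi : phi.ker = bbZ.addSubgroupOf bbQ := by
  ext x
  rw [AddMonoidHom.mem_ker, AddSubgroup.mem_addSubgroupOf]
  constructor
  · intro h
    obtain ⟨h1, h2⟩ := Prod.ext_iff.mp (Subtype.ext_iff.mp h)
    refine ⟨x.2, ?_, ?_⟩
    · exact chi_eq_zero_iff.mp (Subtype.ext_iff.mp h1)
    · intro m
      have h3 := congrFun h2 m
      have h4 := QuotientAddGroup.eq_zero_iff _ |>.mp h3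
      obtain ⟨n, hn⟩ := AddSubgroup.mem_zmultiples_iff.mp h4
      exact ⟨n, by simpa using hn.symm⟩
  · rintro ⟨hQ, hS, hI⟩
    apply Subtype.ext
    apply Prod.ext
    · apply Subtype.ext
      exact chi_eq_zero_iff.mpr hS
    · funext m
      refine (QuotientAddGroup.eq_zero_iff _).mpr ?_
      obtain ⟨n, hn⟩ := hI m
      exact AddSubgroup.mem_zmultiples_iff.mpr ⟨n, by simp [hn]⟩

lemma phi_surj : Function.Surjective phi := by
  classical
  rintro ⟨⟨b, f⟩, hy⟩
  obtain ⟨p, q, hp, h3, hb⟩ := b.2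
  choose r hr using fun m => QuotientAddGroup.mk_surjective (f m)
  set a : ℚ := (q:ℚ)/(p:ℚ) with hadef
  set x : ℚ × (ℤ → ℚ) :=
    (a, fun m => if f m = (3 ^ m.natAbs : ℕ) • (b : QmodZ) then 3 ^ m.natAbs * a else r m)
    with hxdef
  have hxQ : x ∈ bbQ := by
    refine Set.Finite.subset hy ?_
    intro m hm
    simp only [Set.mem_setOf_eq] at hm ⊢
    intro hfm
    apply hm
    simp only [hxdef, if_pos hfm]
  refine ⟨⟨x, hxQ⟩, ?_⟩
  have hmka : ((a : ℚ) : QmodZ) = (b : QmodZ) := hb.symm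
  apply Subtype.ext
  apply Prod.ext
  · apply Subtype.ext
    show chi a = (b : QmodZ)
    rw [chi_of_isR (isR_div_int h3), hmka]
  · funext m
    show ((x.2 m : ℚ) : QmodZ) = f m
    by_cases hm : f m = (3 ^ m.natAbs : ℕ) • (b : QmodZ)
    · simp only [hxdef, if_pos hm]
      rw [hm, ← hmka]
      exact cast_pow_mul m.natAbs a
    · simp only [hxdef, if_neg hm]
      exact hr m

/-- 𝐐/𝐙 is isomorphic, as an abelian group, to the subgroup of
ℚ³_χ ⊕ ∏_{m∈ℤ}(ℚ/ℤ) of pairs (b, (b_m)) with b_m = 3^{|m|}·b for all but finitely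
many m ∈ ℤ. -/
theorem bbQ_quot_bbZ_iso :
    Nonempty ((↥bbQ ⧸ bbZ.addSubgroupOf bbQ) ≃+ ↥targetGrp) :=
  have e1 : (↥bbQ ⧸ bbZ.addSubgroupOf bbQ) ≃+ (↥bbQ ⧸ phi.ker) :=
    QuotientAddGroup.quotientAddEquivOfEq ker_phi.symm
  have e2 : (↥bbQ ⧸ phi.ker) ≃+ ↥targetGrp :=
    QuotientAddGroup.quotientKerEquivOfSurjective phi phi_surj
  ⟨e1.trans e2⟩

end
end
end

section
/- The element x = (1, (3^{|m|})_{m∈ℤ}) belongs to 𝐙 and is divisible by 2 in 𝐐 (indeed (1/2, (3^{|m|}/2)_{m∈ℤ}) ∈ 𝐐), but x is not divisible by 2 in 𝐙. Consequently 𝐙 is not a pure subgroup of 𝐐, and the short exact sequence 0 → 𝐙 → 𝐐 → 𝐐/𝐙 → 0 is not a pure extension of abelian groups. -/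
noncomputable section

lemma mem_bbQ_of_forall_snd_eq {x : ℚ × (ℤ → ℚ)} (h : ∀ m, x.2 m = 3 ^ m.natAbs * x.1) :
    x ∈ bbQ :=
  mem_bbQ.2 <| by simp [h]

lemma nsmul_ne_of_mem_bbZ_of_not_dvd {x y : ℚ × (ℤ → ℚ)} (hy : y ∈ bbZ) {n : ℕ} {m k : ℤ}
    (hx : x.2 m = k) (hk : ¬ (n : ℤ) ∣ k) : n • y ≠ x := by
  rintro rfl
  obtain ⟨l, hl⟩ := hy.2.2 m
  have : ((n * l : ℤ) : ℚ) = k := by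
    rw [← hx, Prod.smul_snd, Pi.smul_apply, hl, nsmul_eq_mul]
    push_cast
    rfl
  exact hk ⟨l, (Int.cast_injective this).symm⟩

/-- The element x = (1, (3^{|m|})_m) lies in 𝐙 and is divisible by 2 in 𝐐
(with witness (1/2, (3^{|m|}/2)_m) ∈ 𝐐), but is not divisible by 2 in 𝐙.  Consequently 𝐙 is
not a pure subgroup of 𝐐, i.e. the extension 0 → 𝐙 → 𝐐 → 𝐐/𝐙 → 0 is not pure. -/
theorem bbZ_not_pure_in_bbQ :
    (((1 : ℚ), fun m : ℤ => ((3 : ℚ) ^ m.natAbs)) ∈ bbZ) ∧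
    (((1 / 2 : ℚ), fun m : ℤ => ((3 : ℚ) ^ m.natAbs / 2)) ∈ bbQ) ∧
    ((2 : ℕ) • ((1 / 2 : ℚ), fun m : ℤ => ((3 : ℚ) ^ m.natAbs / 2))
      = ((1 : ℚ), fun m : ℤ => ((3 : ℚ) ^ m.natAbs))) ∧
    (¬ ∃ y ∈ bbZ, (2 : ℕ) • y = ((1 : ℚ), fun m : ℤ => ((3 : ℚ) ^ m.natAbs))) ∧
    ¬ (∀ n : ℕ, ∀ x ∈ bbZ, (∃ y ∈ bbQ, n • y = x) → ∃ z ∈ bbZ, n • z = x) := by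
  have hxZ : ((1 : ℚ), fun m : ℤ => (3 : ℚ) ^ m.natAbs) ∈ bbZ :=
    ⟨mem_bbQ_of_forall_snd_eq fun m => (mul_one _).symm, ⟨1, 0, by norm_num⟩,
      fun m => ⟨3 ^ m.natAbs, by push_cast; rfl⟩⟩
  have hyQ : ((1 / 2 : ℚ), fun m : ℤ => (3 : ℚ) ^ m.natAbs / 2) ∈ bbQ :=
    mem_bbQ_of_forall_snd_eq fun m => div_eq_mul_one_div _ _
  have hsmul : (2 : ℕ) • ((1 / 2 : ℚ), fun m : ℤ => (3 : ℚ) ^ m.natAbs / 2)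
      = ((1 : ℚ), fun m : ℤ => (3 : ℚ) ^ m.natAbs) := by
    ext m
    · norm_num
    · simp only [Prod.smul_snd, Pi.smul_apply]
      ring
  have hnot : ¬ ∃ y ∈ bbZ, (2 : ℕ) • y = ((1 : ℚ), fun m : ℤ => (3 : ℚ) ^ m.natAbs) :=
    fun ⟨_, hy, h⟩ => nsmul_ne_of_mem_bbZ_of_not_dvd (m := 0) (k := 1) hy (by simp)
      (by decide) h
  exact ⟨hxZ, hyQ, hsmul, hnot, fun h => hnot (h 2 _ hxZ ⟨_, hyQ, hsmul⟩)⟩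

end
end

section
/- Consider the injective homomorphism ζ' : 𝐙 → ℚ ⊕ 𝐐 given by ζ'(x) = (0, x). The image ζ'(𝐙) = {0} × 𝐙 is not a pure subgroup of ℚ ⊕ 𝐐: there exists x ∈ 𝐙 with (0, x) divisible by 2 in ℚ ⊕ 𝐐 but (0, x) not divisible by 2 in {0} × 𝐙. Hence the extension 0 → 𝐙 → ℚ ⊕ 𝐐 → (ℚ ⊕ 𝐐)/ζ'(𝐙) → 0 is not a pure extension of abelian groups. -/
noncomputable section

/-- The image ζ'(𝐙) = {0} × 𝐙 of the embedding ζ' : 𝐙 → ℚ ⊕ 𝐐, x ↦ (0, x). -/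
def zetaImage : AddSubgroup (ℚ × ↥bbQ) where
  carrier := {p | p.1 = 0 ∧ ((p.2 : ℚ × (ℤ → ℚ)) ∈ bbZ)}
  zero_mem' := ⟨rfl, zero_mem _⟩
  add_mem' := by
    rintro p q ⟨hp1, hp2⟩ ⟨hq1, hq2⟩
    exact ⟨by show p.1 + q.1 = 0; rw [hp1, hq1, add_zero], add_mem hp2 hq2⟩
  neg_mem' := by
    rintro p ⟨hp1, hp2⟩
    exact ⟨by show -p.1 = 0; rw [hp1, neg_zero], neg_mem hp2⟩

/-- The image of ζ' : 𝐙 → ℚ ⊕ 𝐐, x ↦ (0, x), is not a pure subgroup of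
ℚ ⊕ 𝐐: some element of it is divisible by 2 in ℚ ⊕ 𝐐 but not within the image.  Hence the
extension 0 → 𝐙 → ℚ ⊕ 𝐐 → (ℚ ⊕ 𝐐)/ζ'(𝐙) → 0 is not a pure extension of abelian groups. -/
theorem zetaImage_not_pure :
    (∃ x ∈ zetaImage, (∃ y : ℚ × ↥bbQ, (2 : ℕ) • y = x) ∧
      ¬ ∃ z ∈ zetaImage, (2 : ℕ) • z = x) ∧
    ¬ (∀ n : ℕ, ∀ x ∈ zetaImage, (∃ y : ℚ × ↥bbQ, n • y = x) →
        ∃ z ∈ zetaImage, n • z = x) := by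
  -- the element u = (1, (3^{|m|})_m) ∈ 𝐙
  set u : ℚ × (ℤ → ℚ) := (1, fun m => 3 ^ m.natAbs) with hu_def
  have huQ : u ∈ bbQ := by
    have : {m : ℤ | u.2 m ≠ 3 ^ m.natAbs * u.1} = ∅ := by
      ext m; simp [hu_def]
    rw [mem_bbQ, this]; exact Set.finite_empty
  -- the half v = u/2 ∈ 𝐐
  set v : ℚ × (ℤ → ℚ) := (1 / 2, fun m => 3 ^ m.natAbs / 2) with hv_def
  have hvQ : v ∈ bbQ := by
    have : {m : ℤ | v.2 m ≠ 3 ^ m.natAbs * v.1} = ∅ := by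
      ext m; simp [hv_def]; ring
    rw [mem_bbQ, this]; exact Set.finite_empty
  set x : ℚ × ↥bbQ := (0, ⟨u, huQ⟩) with hx_def
  have hxmem : x ∈ zetaImage := by
    refine ⟨rfl, ⟨huQ, ⟨1, 0, by norm_num [hu_def]⟩, fun m => ⟨3 ^ m.natAbs, by push_cast; rfl⟩⟩⟩
  have hdiv : ∃ y : ℚ × ↥bbQ, (2 : ℕ) • y = x := by
    refine ⟨(0, ⟨v, hvQ⟩), ?_⟩
    refine Prod.ext (by simp [hx_def]) (Subtype.ext ?_)
    show (2 : ℕ) • v = u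
    refine Prod.ext (by norm_num [hv_def, hu_def]) (funext fun m => ?_)
    show (2 : ℕ) • (3 ^ m.natAbs / 2 : ℚ) = 3 ^ m.natAbs
    push_cast; ring
  have hnodiv : ¬ ∃ z ∈ zetaImage, (2 : ℕ) • z = x := by
    rintro ⟨z, ⟨hz1, hzQ, ⟨k, j, hk⟩, hzi⟩, hz⟩
    have h2 : (2 : ℕ) • (z.2 : ℚ × (ℤ → ℚ)) = u := by
      have := congrArg (fun p : ℚ × ↥bbQ => (p.2 : ℚ × (ℤ → ℚ))) hz
      simpa [hx_def] using this
    have h1 : (2 : ℚ) * (z.2 : ℚ × (ℤ → ℚ)).1 = 1 := by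
      have := congrArg Prod.fst h2
      simpa [hu_def, two_smul, two_mul] using this
    rw [hk] at h1
    have h3 : (2 * k : ℚ) = (3 : ℚ) ^ j := by
      field_simp at h1
      linarith [h1]
    have h4 : (2 * k : ℤ) = 3 ^ j := by exact_mod_cast h3
    have hodd : Odd ((3 : ℤ) ^ j) := Odd.pow ⟨1, by ring⟩
    rw [← h4] at hodd
    exact (Int.not_odd_iff_even.mpr ⟨k, by ring⟩) hodd
  refine ⟨⟨x, hxmem, hdiv, hnodiv⟩, fun h => hnodiv (h 2 x hxmem hdiv)⟩

end
end

section
/- Let 𝐙₊ = {(a, (a_m)_{m∈ℤ}) ∈ 𝐙 : a ≥ 0 and a_m ≥ 0 for all m ∈ ℤ}, and define C ⊆ ℚ ⊕ 𝐐 by C = {(q, y) ∈ ℚ ⊕ 𝐐 : q > 0} ∪ {(0, y) : y ∈ 𝐙₊} (viewing 𝐙₊ ⊆ 𝐙 ⊆ 𝐐). Then: (i) C + C ⊆ C; (ii) C ∩ (−C) = {0}; (iii) C − C = ℚ ⊕ 𝐐; (iv) ℚ ⊕ 𝐐 is torsion-free; but (v) the ordered group (ℚ ⊕ 𝐐, C)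 is NOT unperforated (hence not weakly unperforated): the element g = (0, (1/2, (3^{|m|}/2)_{m∈ℤ})) satisfies 2·g ∈ C but g ∉ C. -/
/-!
A positive first coordinate puts an element in `C` outright, so `C` is a generating cone; an
element with first coordinate `0` lies in `C` only through `𝐙₊`, whose coordinates are integers.
Doubling `g` gives `(0, (1, (3^|m|)_m)) ∈ 𝐙₊`, but the `m = 0` coordinate of `g` is `1/2`.
-/

noncomputable section

/-- The positive cone 𝐙₊ = {(a, (a_m)) ∈ 𝐙 : a ≥ 0 and a_m ≥ 0 for all m}. -/
def bbZpos : Set (ℚ × (ℤ → ℚ)) :=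
  {x | x ∈ bbZ ∧ 0 ≤ x.1 ∧ ∀ m : ℤ, 0 ≤ x.2 m}

/-- The element (1/2, (3^{|m|}/2)_m) of ℚ ⊕ ∏ℚ. -/
def halfElem : ℚ × (ℤ → ℚ) := ((1 / 2 : ℚ), fun m : ℤ => ((3 : ℚ) ^ m.natAbs / 2))

lemma halfElem_mem_bbQ : halfElem ∈ bbQ := by
  have h : {m : ℤ | halfElem.2 m ≠ 3 ^ m.natAbs * halfElem.1} = ∅ := by
    ext m
    simp only [halfElem, Set.mem_setOf_eq, Set.mem_empty_iff_false, iff_false, not_not]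
    ring
  rw [mem_bbQ, h]
  exact Set.finite_empty

/-- The cone C = {(q, y) ∈ ℚ ⊕ 𝐐 : q > 0} ∪ {(0, y) : y ∈ 𝐙₊}. -/
def coneC : Set (ℚ × ↥bbQ) :=
  {p | 0 < p.1 ∨ (p.1 = 0 ∧ ((p.2 : ℚ × (ℤ → ℚ)) ∈ bbZpos))}

lemma add_mem_bbZpos {x y : ℚ × (ℤ → ℚ)} (hx : x ∈ bbZpos) (hy : y ∈ bbZpos) :
    x + y ∈ bbZpos :=
  ⟨add_mem hx.1 hy.1, add_nonneg hx.2.1 hy.2.1, fun m => add_nonneg (hx.2.2 m) (hy.2.2 m)⟩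

lemma eq_zero_of_mem_bbZpos_of_neg_mem {x : ℚ × (ℤ → ℚ)} (hx : x ∈ bbZpos)
    (hnx : -x ∈ bbZpos) : x = 0 :=
  Prod.ext (le_antisymm (neg_nonneg.mp hnx.2.1) hx.2.1)
    (funext fun m => le_antisymm (neg_nonneg.mp (hnx.2.2 m)) (hx.2.2 m))

lemma add_mem_coneC {p q : ℚ × ↥bbQ} (hp : p ∈ coneC) (hq : q ∈ coneC) : p + q ∈ coneC := by
  rcases hp with hp | ⟨hp0, hpZ⟩ <;> rcases hq with hq | ⟨hq0, hqZ⟩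
  · exact Or.inl (add_pos hp hq)
  · exact Or.inl (by simpa [hq0] using hp)
  · exact Or.inl (by simpa [hp0] using hq)
  · exact Or.inr ⟨by simp [hp0, hq0], add_mem_bbZpos hpZ hqZ⟩

lemma fst_nonneg_of_mem_coneC {p : ℚ × ↥bbQ} (hp : p ∈ coneC) : 0 ≤ p.1 :=
  hp.elim le_of_lt fun h => h.1.ge

lemma eq_zero_of_mem_coneC_of_neg_mem {p : ℚ × ↥bbQ} (hp : p ∈ coneC) (hnp : -p ∈ coneC) :
    p = 0 := by
  have hp1 : p.1 = 0 :=
    le_antisymm (neg_nonneg.mp (fst_nonneg_of_mem_coneC hnp)) (fst_nonneg_of_mem_coneC hp)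
  obtain ⟨-, hpZ⟩ := hp.resolve_left (by simp [hp1])
  obtain ⟨-, hnpZ⟩ := hnp.resolve_left (by simp [hp1])
  exact Prod.ext hp1 (Subtype.ext (eq_zero_of_mem_bbZpos_of_neg_mem hpZ hnpZ))

lemma mem_coneC_of_pos {p : ℚ × ↥bbQ} (hp : 0 < p.1) : p ∈ coneC := Or.inl hp

lemma exists_mem_coneC_eq_sub (p : ℚ × ↥bbQ) : ∃ a ∈ coneC, ∃ b ∈ coneC, p = a - b := by
  set t := |p.1| + 1
  refine ⟨(p.1 + t, p.2), mem_coneC_of_pos ?_, (t, 0), mem_coneC_of_pos ?_, by ext <;> simp⟩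
  · linarith [neg_abs_le p.1]
  · positivity

lemma two_nsmul_halfElem : (2 : ℕ) • halfElem = ((1 : ℚ), fun m : ℤ => (3 : ℚ) ^ m.natAbs) := by
  ext m <;> simp [halfElem]
  ring

lemma two_nsmul_halfElem_mem_bbZpos : (2 : ℕ) • halfElem ∈ bbZpos := by
  rw [two_nsmul_halfElem]
  refine ⟨⟨?_, ⟨1, 0, by norm_num⟩, fun m => ⟨3 ^ m.natAbs, by push_cast; rfl⟩⟩,
    zero_le_one, fun m => by positivity⟩
  simp [mem_bbQ]

lemma halfElem_not_mem_bbZ : halfElem ∉ bbZ := by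
  rintro ⟨-, -, hint⟩
  obtain ⟨n, hn⟩ := hint 0
  have : (2 * n : ℤ) = 1 := by
    simp only [halfElem, Int.natAbs_zero, pow_zero] at hn
    exact_mod_cast (by linarith : (2 : ℚ) * n = 1)
  omega

/-- (ℚ ⊕ 𝐐, C) is a torsion-free ordered abelian group:
(i) C + C ⊆ C; (ii) C ∩ (−C) = {0}; (iii) C − C = ℚ ⊕ 𝐐; (iv) ℚ ⊕ 𝐐 is torsion-free;
but (v) it is NOT unperforated (hence not weakly unperforated):
g = (0, (1/2, (3^{|m|}/2)_m)) satisfies 2·g ∈ C but g ∉ C. -/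
theorem coneC_not_weakly_unperforated :
    (∀ p ∈ coneC, ∀ q ∈ coneC, p + q ∈ coneC) ∧
    (∀ p, p ∈ coneC → -p ∈ coneC → p = 0) ∧
    (∀ p : ℚ × ↥bbQ, ∃ a ∈ coneC, ∃ b ∈ coneC, p = a - b) ∧
    (∀ p : ℚ × ↥bbQ, ∀ n : ℕ, 0 < n → n • p = 0 → p = 0) ∧
    ((2 : ℕ) • (((0 : ℚ), (⟨halfElem, halfElem_mem_bbQ⟩ : ↥bbQ)) : ℚ × ↥bbQ) ∈ coneC ∧
      (((0 : ℚ), (⟨halfElem, halfElem_mem_bbQ⟩ : ↥bbQ)) : ℚ × ↥bbQ) ∉ coneC) := by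
  refine ⟨fun _ hp _ hq => add_mem_coneC hp hq, fun _ => eq_zero_of_mem_coneC_of_neg_mem,
    exists_mem_coneC_eq_sub, fun _ _ hn h => (nsmul_eq_zero_iff_right hn.ne').mp h,
    Or.inr ⟨by simp, two_nsmul_halfElem_mem_bbZpos⟩, ?_⟩
  rintro (h | ⟨-, hZ, -⟩)
  · exact lt_irrefl _ h
  · exact halfElem_not_mem_bbZ hZ

end
end
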